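/- arXiv:1403.0274 — 2 statements merged into one kernel-verified Lean document; each statement's English description precedes it below -/
import Mathlib

section
/- If I is an ideal of a finite semigroup S, then the set of all subsemigroups of S equals { ⟨(U \ {0}) ∪ L⟩ : U a subsemigroup of the Rees quotient S/I, L a subsemigroup of I }, where ⟨X⟩ denotes the subsemigroup of S generated by X. -/
/-!
A subsemigroup `T` of `S` is recovered as `⟨(T \ I) ∪ (T ∩ I)⟩ = ⟨T⟩ = T`: the part `T \ I` is a
subsemigroup of `S/I` with its zero removed, and `T ∩ I` is closed under multiplication because
`I` is an ideal. Conversely every set of the form `⟨X⟩` is a subsemigroup.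
-/

theorem Subsemigroup.closure_diff_union_inter {S : Type*} [Mul S] (T : Subsemigroup S)
    (I : Set S) : (closure ((T : Set S) \ I ∪ T ∩ I) : Set S) = T := by
  rw [Set.sdiff_union_inter, closure_eq]

theorem stmt1_general {S : Type*} [Semigroup S] (I : Set S)
    (hI : ∀ x ∈ I, ∀ s : S, s * x ∈ I ∧ x * s ∈ I) :
    {T : Set S | ∀ a ∈ T, ∀ b ∈ T, a * b ∈ T} =
      {T : Set S | ∃ U L : Set S,
        U ⊆ Iᶜ ∧ (∀ a ∈ U, ∀ b ∈ U, a * b ∉ I → a * b ∈ U) ∧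
        L ⊆ I ∧ (∀ a ∈ L, ∀ b ∈ L, a * b ∈ L) ∧
        T = (Subsemigroup.closure (U ∪ L) : Set S)} := by
  ext T
  constructor
  · intro hT
    let T' : Subsemigroup S := ⟨T, fun ha hb => hT _ ha _ hb⟩
    exact ⟨T \ I, T ∩ I, Set.sdiff_subset_compl T I,
      fun a ha b hb hab => ⟨hT a ha.1 b hb.1, hab⟩, Set.inter_subset_right,
      fun a ha b hb => ⟨hT a ha.1 b hb.1, (hI a ha.2 b).2⟩,
      (T'.closure_diff_union_inter I).symm⟩
  · rintro ⟨U, L, -, -, -, -, rfl⟩ a ha b hb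
    exact Subsemigroup.mul_mem _ ha hb

/-- If `I` is an ideal of a finite semigroup `S`, then the set of all subsemigroups of `S`
equals `{ ⟨(U \ {0}) ∪ L⟩ : U ∈ Sub(S/I), L ∈ Sub(I) }`.  Here a subsemigroup of the Rees
quotient `S/I`, with its zero removed, is encoded as a subset `U ⊆ S \ I` such that for
`a, b ∈ U`, if the product `a * b` lies outside `I` (i.e. is nonzero in `S/I`) then it
belongs to `U`; every subsemigroup of `S/I` arises this way and conversely. -/
theorem stmt1 {S : Type*} [Semigroup S] [Fintype S] (I : Set S)
    (hI : ∀ x ∈ I, ∀ s : S, s * x ∈ I ∧ x * s ∈ I) :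
    {T : Set S | ∀ a ∈ T, ∀ b ∈ T, a * b ∈ T} =
      {T : Set S | ∃ U L : Set S,
        U ⊆ Iᶜ ∧ (∀ a ∈ U, ∀ b ∈ U, a * b ∉ I → a * b ∈ U) ∧
        L ⊆ I ∧ (∀ a ∈ L, ∀ b ∈ L, a * b ∈ L) ∧
        T = (Subsemigroup.closure (U ∪ L) : Set S)} :=
  stmt1_general I hI
end

section
/- Let S be a finite semigroup and s, t ∈ S with s ≠ t and ⟨s⟩ = ⟨t⟩. Then the cyclic semigroup ⟨s⟩ is a group. -/
/-!
Every element of `⟨s⟩` other than `s` lies in `s * ⟨s⟩`. Applying this to `t ∈ ⟨s⟩` and to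
`s ∈ ⟨t⟩` gives `s = s * e` for some `e ∈ ⟨s⟩`. Since `⟨s⟩` is commutative and generated by `s`,
`e` is then an identity of `⟨s⟩`, and the elements of `⟨s⟩` having an inverse with respect to `e`
form a subsemigroup containing `s`, hence all of `⟨s⟩`.
-/

namespace Subsemigroup

variable {S : Type*} [Semigroup S] {s e x : S}

theorem mul_comm_of_mem_closure_singleton {y : S} (hx : x ∈ closure {s}) (hy : y ∈ closure {s}) :
    x * y = y * x :=
  haveI := isMulCommutative_closure S (s := {s}) (by simp)
  setLike_mul_comm hx hy

theorem mem_closure_singleton_iff :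
    x ∈ closure {s} ↔ x = s ∨ ∃ u ∈ closure {s}, x = s * u := by
  refine ⟨fun hx ↦ ?_, ?_⟩
  · induction hx using closure_induction with
    | mem y hy => exact .inl hy
    | mul y z _ hz hy _ =>
      refine .inr ?_
      rcases hy with rfl | ⟨u, hu, rfl⟩
      · exact ⟨z, hz, rfl⟩
      · exact ⟨u * z, mul_mem hu hz, mul_assoc _ _ _⟩
  · rintro (rfl | ⟨u, hu, rfl⟩)
    · exact subset_closure rfl
    · exact mul_mem (subset_closure rfl) hu

theorem exists_mem_closure_singleton_mul_eq_self {t : S} (hst : s ≠ t)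
    (h : closure {s} = closure {t}) : ∃ e ∈ closure {s}, s * e = s := by
  have ht : t ∈ closure {s} := h ▸ subset_closure rfl
  have hs : s ∈ closure {t} := h ▸ subset_closure rfl
  obtain rfl | ⟨u, hu, rfl⟩ := mem_closure_singleton_iff.1 ht
  · exact absurd rfl hst
  obtain h' | ⟨v, hv, hsv⟩ := mem_closure_singleton_iff.1 hs
  · exact absurd h' hst
  exact ⟨u * v, mul_mem hu (h ▸ hv), by rw [← mul_assoc, ← hsv]⟩

theorem mul_eq_self_of_mem_closure_singleton (he : s * e = s) (hx : x ∈ closure {s}) :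
    x * e = x := by
  induction hx using closure_induction with
  | mem y hy => rwa [hy]
  | mul y z _ _ _ hz => rw [mul_assoc, hz]

theorem exists_mul_eq_of_mem_closure_singleton (he_mem : e ∈ closure {s}) (he : s * e = s)
    (hx : x ∈ closure {s}) : ∃ y ∈ closure {s}, x * y = e := by
  induction hx using closure_induction with
  | mem y hy =>
    rw [Set.mem_singleton_iff.1 hy]
    obtain rfl | ⟨w, hw, rfl⟩ := mem_closure_singleton_iff.1 he_mem
    · exact ⟨_, subset_closure rfl, he⟩
    · exact ⟨w, hw, rfl⟩
  | mul x₁ x₂ hx₁ hx₂ ih₁ ih₂ =>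
    obtain ⟨y₁, hy₁, hxy₁⟩ := ih₁
    obtain ⟨y₂, hy₂, hxy₂⟩ := ih₂
    refine ⟨y₁ * y₂, mul_mem hy₁ hy₂, ?_⟩
    calc x₁ * x₂ * (y₁ * y₂) = x₁ * y₁ * (x₂ * y₂) := by
          rw [mul_assoc, ← mul_assoc x₂, mul_comm_of_mem_closure_singleton hx₂ hy₁, mul_assoc,
            ← mul_assoc]
      _ = e := by rw [hxy₁, hxy₂, mul_eq_self_of_mem_closure_singleton he he_mem]

end Subsemigroup

open Subsemigroup in
theorem stmt4_general {S : Type*} [Semigroup S] (s t : S) (hst : s ≠ t)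
    (h : Subsemigroup.closure {s} = Subsemigroup.closure {t}) :
    ∃ e ∈ Subsemigroup.closure {s},
      (∀ x ∈ Subsemigroup.closure {s}, e * x = x ∧ x * e = x) ∧
      (∀ x ∈ Subsemigroup.closure {s}, ∃ y ∈ Subsemigroup.closure {s},
        x * y = e ∧ y * x = e) := by
  obtain ⟨e, he_mem, he⟩ := exists_mem_closure_singleton_mul_eq_self hst h
  refine ⟨e, he_mem, fun x hx ↦ ?_, fun x hx ↦ ?_⟩
  · have hxe := mul_eq_self_of_mem_closure_singleton he hx
    exact ⟨mul_comm_of_mem_closure_singleton he_mem hx ▸ hxe, hxe⟩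
  · obtain ⟨y, hy, hxy⟩ := exists_mul_eq_of_mem_closure_singleton he_mem he hx
    exact ⟨y, hy, hxy, mul_comm_of_mem_closure_singleton hy hx ▸ hxy⟩

/-- If `s ≠ t` are elements of a finite semigroup with `⟨s⟩ = ⟨t⟩`, then the cyclic
semigroup `⟨s⟩` is a group: it has an identity element and every element has an inverse. -/
theorem stmt4 {S : Type*} [Semigroup S] [Fintype S] (s t : S) (hst : s ≠ t)
    (h : Subsemigroup.closure {s} = Subsemigroup.closure {t}) :
    ∃ e ∈ Subsemigroup.closure {s},
      (∀ x ∈ Subsemigroup.closure {s}, e * x = x ∧ x * e = x) ∧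
      (∀ x ∈ Subsemigroup.closure {s}, ∃ y ∈ Subsemigroup.closure {s},
        x * y = e ∧ y * x = e) :=
  stmt4_general s t hst h
end
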